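/- Any sequence of jeu de taquin slides rectifying a skew standard tableau T of shape ν/λ can be encoded by a standard tableau A of straight shape λ, so that the rectification via that sequence equals infusion₁(A,T). -/

import Mathlib

open scoped Classical

noncomputable section

variable {Λ : Type} [Fintype Λ] [PartialOrder Λ]

/-- The set of boxes occupied by a (partial) filling. -/
def shape (T : Λ → Option ℕ) : Finset Λ :=
  Finset.univ.filter fun x => (T x).isSome

/-- Lower order ideal (straight shape). -/
def IsLowerIdeal (S : Finset Λ) : Prop := ∀ x ∈ S, ∀ y, y ≤ x → y ∈ S

/-- `T` is a standard filling of a skew shape: its domain is a difference of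
nested lower order ideals, its labels are exactly `1,…,m` each used once, and
labels strictly increase along the order of `Λ`. -/
def IsStandard (T : Λ → Option ℕ) : Prop :=
  (∃ lam : Finset Λ, IsLowerIdeal lam ∧ Disjoint lam (shape T) ∧
    IsLowerIdeal (lam ∪ shape T)) ∧
  (∀ i : ℕ, 1 ≤ i → i ≤ (shape T).card → ∃! x : Λ, T x = some i) ∧
  (∀ x ∈ shape T, ∃ i : ℕ, T x = some i ∧ 1 ≤ i ∧ i ≤ (shape T).card) ∧
  (∀ x y : Λ, x ∈ shape T → y ∈ shape T → x < y →
    ∀ i j : ℕ, T x = some i → T y = some j → i < j)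

def lab (T : Λ → Option ℕ) (x : Λ) : ℕ := (T x).getD 0

def pickMinBy (f : Λ → ℕ) (s : Finset Λ) (h : s.Nonempty) : Λ :=
  (Finset.exists_min_image s f h).choose

def pickMaxBy (f : Λ → ℕ) (s : Finset Λ) (h : s.Nonempty) : Λ :=
  (Finset.exists_max_image s f h).choose

/-- One full jeu de taquin slide into the vacant box `x`: repeatedly move into the
vacancy the smallest label among the boxes covering it. -/
def slideAux : ℕ → (Λ → Option ℕ) → Λ → (Λ → Option ℕ)
  | 0, T, _ => T
  | n+1, T, x =>
    let cands := (shape T).filter fun y => x ⋖ y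
    if h : cands.Nonempty then
      let y := pickMinBy (lab T) cands h
      slideAux n (fun z => if z = x then T y else if z = y then none else T z) y
    else T

/-- One full reverse jeu de taquin slide into the vacant box `x`: repeatedly move
into the vacancy the largest label among the boxes it covers. -/
def revSlideAux : ℕ → (Λ → Option ℕ) → Λ → (Λ → Option ℕ)
  | 0, T, _ => T
  | n+1, T, x =>
    let cands := (shape T).filter fun y => y ⋖ x
    if h : cands.Nonempty then
      let y := pickMaxBy (lab T) cands h
      revSlideAux n (fun z => if z = x then T y else if z = y then none else T z) y
    else T

/-- `x` is an admissible box for an (inner) jeu de taquin slide on `T`: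
vacant, below some box of `T`, and maximal such. -/
def InnerAdmissible (T : Λ → Option ℕ) (x : Λ) : Prop :=
  T x = none ∧ (∃ y ∈ shape T, x < y) ∧
  ∀ z : Λ, T z = none → (∃ y ∈ shape T, z < y) → ¬ x < z

/-- `x` is an admissible box for a reverse jeu de taquin slide on `T`:
vacant, above some box of `T`, and minimal such. -/
def OuterAdmissible (T : Λ → Option ℕ) (x : Λ) : Prop :=
  T x = none ∧ (∃ y ∈ shape T, y < x) ∧
  ∀ z : Λ, T z = none → (∃ y ∈ shape T, y < z) → ¬ z < x

def jdt (x : Λ) (T : Λ → Option ℕ) : Λ → Option ℕ :=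
  if InnerAdmissible T x then slideAux (Fintype.card Λ) T x else T

def revjdt (x : Λ) (T : Λ → Option ℕ) : Λ → Option ℕ :=
  if OuterAdmissible T x then revSlideAux (Fintype.card Λ) T x else T

/-- Apply a sequence of slides (`true`) and reverse slides (`false`) at the
given boxes. -/
def applySeq (s : List (Bool × Λ)) (T : Λ → Option ℕ) : Λ → Option ℕ :=
  s.foldl (fun T p => if p.1 then jdt p.2 T else revjdt p.2 T) T

/-- Dual equivalence: same shape, and every common sequence of slides and
reverse slides produces tableaux of the same shape. -/
def DualEquiv (T U : Λ → Option ℕ) : Prop :=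
  shape T = shape U ∧
  ∀ s : List (Bool × Λ), shape (applySeq s T) = shape (applySeq s U)

/-- `mu` extends `lam`: `lam ∪ mu` is a straight shape containing `lam` and `mu`
as complementary down-closed and up-closed subsets. -/
def ShapeExtends (mu lam : Finset Λ) : Prop :=
  Disjoint lam mu ∧ IsLowerIdeal (lam ∪ mu) ∧
  (∀ x ∈ lam, ∀ y ∈ lam ∪ mu, y ≤ x → y ∈ lam) ∧
  (∀ x ∈ mu, ∀ y ∈ lam ∪ mu, x ≤ y → y ∈ mu)

/-- `A ⨿ B`: keep the labels of `A` and shift the labels of `B` up by `|shape A|`. -/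
def tabConcat (A B : Λ → Option ℕ) : Λ → Option ℕ := fun x =>
  match A x with
  | some i => some i
  | none => (B x).map (· + (shape A).card)

/-- One step of infusion on a triple `(T, U, V)`: remove the largest label of `T`
at its box `x`, slide `U` into `x`, and record the removed label at the vacated
hole in `V`. -/
def infusionStep :
    ((Λ → Option ℕ) × (Λ → Option ℕ) × (Λ → Option ℕ)) →
    ((Λ → Option ℕ) × (Λ → Option ℕ) × (Λ → Option ℕ)) := fun p =>
  let T := p.1; let U := p.2.1; let V := p.2.2
  if h : (shape T).Nonempty then
    let x := pickMaxBy (lab T) (shape T) h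
    let T' := fun z => if z = x then none else T z
    let U' := slideAux (Fintype.card Λ) U x
    let hole := if h2 : (shape U \ shape U').Nonempty then h2.choose else x
    let V' := fun z => if z = hole then T x else V z
    (T', U', V')
  else p

/-- `infusion (T,U)` for `U` extending `T`: slide `U` through the boxes of `T` in
decreasing label order; first output is the slid `U`, second records `T`'s labels
in the vacated holes. -/
def infusion (T U : Λ → Option ℕ) : (Λ → Option ℕ) × (Λ → Option ℕ) :=
  let r := infusionStep^[Fintype.card Λ] (T, U, fun _ => none)
  (r.2.1, r.2.2)

/-- One step of reverse infusion: remove the smallest label of `U` at its box `x`,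
reverse-slide `T` into `x`, and record the removed label at the vacated hole. -/
def revinfusionStep :
    ((Λ → Option ℕ) × (Λ → Option ℕ) × (Λ → Option ℕ)) →
    ((Λ → Option ℕ) × (Λ → Option ℕ) × (Λ → Option ℕ)) := fun p =>
  let T := p.1; let U := p.2.1; let V := p.2.2
  if h : (shape U).Nonempty then
    let x := pickMinBy (lab U) (shape U) h
    let U' := fun z => if z = x then none else U z
    let T' := revSlideAux (Fintype.card Λ) T x
    let hole := if h2 : (shape T \ shape T').Nonempty then h2.choose else x
    let V' := fun z => if z = hole then U x else V z
    (T', U', V')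
  else p

/-- `revinfusion (T,U)`: reverse-slide `T` through the boxes of `U` in increasing
label order; first output records `U`'s labels in the vacated holes (a straight
tableau), second is the migrated `T`. -/
def revinfusion (T U : Λ → Option ℕ) : (Λ → Option ℕ) × (Λ → Option ℕ) :=
  let r := revinfusionStep^[Fintype.card Λ] (T, U, fun _ => none)
  (r.2.2, r.1)

def applyJdtSeq (l : List Λ) (T : Λ → Option ℕ) : Λ → Option ℕ :=
  l.foldl (fun T x => jdt x T) T

/-- `V` is a rectification of `T`: obtained from `T` by jeu de taquin slides and of
straight shape. -/
def IsRectificationOf (V T : Λ → Option ℕ) : Prop :=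
  (∃ l : List Λ, applyJdtSeq l T = V) ∧ IsLowerIdeal (shape V)

/-- The rectification of `T` (any choice of rectifying slide sequence). -/
def rect (T : Λ → Option ℕ) : Λ → Option ℕ :=
  if h : ∃ l : List Λ, IsLowerIdeal (shape (applyJdtSeq l T)) then
    applyJdtSeq h.choose T else T

/-- Sch\"utzenberger's `Δ`: delete the entry `1` at the minimum `b`, decrease all
labels by one, and slide into `b`. -/
def delta (b : Λ) (T : Λ → Option ℕ) : Λ → Option ℕ :=
  slideAux (Fintype.card Λ) (fun x => if x = b then none else (T x).map (· - 1)) b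

/-- Evacuation: the label of `x` is `|λ|+1-i` where `x ∈ shape (Δ^[i-1] T) \ shape (Δ^[i] T)`. -/
def evac (b : Λ) (T : Λ → Option ℕ) : Λ → Option ℕ := fun x =>
  if x ∈ shape T then
    some ((shape T).card + 1 -
      ((Finset.range (shape T).card).filter fun j => x ∈ shape ((delta b)^[j] T)).card)
  else none

/-- The shapes lying one box above `γ` and inside `β`. -/
def Between (γ β : Finset Λ) : Set (Finset Λ) :=
  {ε | IsLowerIdeal ε ∧ γ ⊆ ε ∧ ε ⊆ β ∧ ε.card = γ.card + 1}

/-- The local growth rule for a 2×2 square with corners `α` (top-left), `β`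
(top-right), `γ` (bottom-left), `δ` (bottom-right). -/
def LocalRule (α β γ δ : Finset Λ) : Prop :=
  δ ∈ Between γ β ∧ (δ = α ↔ Between γ β = {α})

/-- A `(p+1) × (q+1)` growth diagram (rows indexed from the top). -/
def IsGrowthDiagram (p q : ℕ) (g : ℕ → ℕ → Finset Λ) : Prop :=
  (∀ i j, i ≤ p → j ≤ q → IsLowerIdeal (g i j)) ∧
  (∀ i j, i ≤ p → j < q → g i j ⊆ g i (j+1) ∧ (g i (j+1)).card = (g i j).card + 1) ∧
  (∀ i j, i < p → j ≤ q → g (i+1) j ⊆ g i j ∧ (g i j).card = (g (i+1) j).card + 1) ∧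
  (∀ i j, i < p → j < q → LocalRule (g i j) (g i (j+1)) (g (i+1) j) (g (i+1) (j+1)))

/-- The tableau of shape `{x₁,…,x_p}` encoding a slide sequence: `x_i` gets label `p+1-i`. -/
def encodeTab (l : List Λ) : Λ → Option ℕ := fun x =>
  if x ∈ l then some (l.length - l.findIdx (fun y => decide (y = x))) else none

end

/-!
The encoding tableau gives `x_i` the label `|λ| + 1 - i`, so infusion, which empties `A` in
decreasing label order, slides into `x_1, x_2, …` in turn and reproduces the rectification.
That `A` is standard of shape `λ` comes from an invariant of the rectification: `λ` minus the
boxes already slid into is disjoint from the current tableau and contains every vacancy lying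
below it. Each `x_i` is such a vacancy, so the `x_i` are distinct boxes of `λ` and fill it by
counting; and a later `x_j` is still a vacancy below the tableau at time `i`, so maximality of the
admissible box `x_i` rules out `x_i < x_j`, which is the increase of the labels of `A`.
-/

open Finset

section Encoding

variable {α : Type}

theorem encodeTab_cons_self (x : α) (l : List α) :
    encodeTab (x :: l) x = some (l.length + 1) := by
  simp [encodeTab, List.findIdx_cons]

theorem encodeTab_cons_of_ne {x y : α} (l : List α) (h : y ≠ x) :
    encodeTab (x :: l) y = encodeTab l y := by
  by_cases hy : y ∈ l <;> simp [encodeTab, List.findIdx_cons, h, hy, Ne.symm h]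

theorem lab_encodeTab_le (l : List α) (y : α) : lab (encodeTab l) y ≤ l.length := by
  unfold lab encodeTab
  split_ifs <;> simp

theorem encodeTab_getElem {l : List α} (hnd : l.Nodup) {m : ℕ} (hm : m < l.length) :
    encodeTab l l[m] = some (l.length - m) := by
  have hidx : l.findIdx (fun y => decide (y = l[m])) = m := by
    rw [List.findIdx_eq hm]
    simp [hnd.getElem_inj_iff]
    omega
  simp [encodeTab, hidx]

theorem encodeTab_eq_some_iff {l : List α} (hnd : l.Nodup) {x : α} {i : ℕ} :
    encodeTab l x = some i ↔ ∃ m, ∃ hm : m < l.length, l[m] = x ∧ l.length - m = i := by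
  constructor
  · intro hx
    have hxl : x ∈ l := by
      by_contra hxl
      simp [encodeTab, hxl] at hx
    obtain ⟨m, hm, rfl⟩ := List.mem_iff_getElem.1 hxl
    exact ⟨m, hm, rfl, Option.some.inj ((encodeTab_getElem hnd hm).symm.trans hx)⟩
  · rintro ⟨m, hm, rfl, rfl⟩
    exact encodeTab_getElem hnd hm

end Encoding

theorem mem_shape {α : Type} [Fintype α] {T : α → Option ℕ} {x : α} :
    x ∈ shape T ↔ T x ≠ none := by
  simp [shape, Option.isSome_iff_ne_none]

theorem shape_encodeTab {α : Type} [Fintype α] (l : List α) :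
    shape (encodeTab l) = l.toFinset := by
  ext x
  by_cases hx : x ∈ l <;> simp [mem_shape, encodeTab, hx]

theorem pickMinBy_mem {α : Type} {f : α → ℕ} {s : Finset α} (h : s.Nonempty) :
    pickMinBy f s h ∈ s :=
  (s.exists_min_image f h).choose_spec.1

theorem le_pickMaxBy {α : Type} {f : α → ℕ} {s : Finset α} (h : s.Nonempty) {b : α}
    (hb : b ∈ s) : f b ≤ f (pickMaxBy f s h) :=
  (s.exists_max_image f h).choose_spec.2 b hb

section Vacancies

variable {α : Type} [PartialOrder α]

-- In a rectification of a tableau of shape `ν/λ`, `lam` is the part of `λ` not yet slid into.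
def CoversVacanciesBelow (lam S : Finset α) : Prop :=
  Disjoint lam S ∧ ∀ z ∉ S, (∃ y ∈ S, z < y) → z ∈ lam

theorem coversVacanciesBelow_of_isLowerIdeal {lam S : Finset α}
    (hdisj : Disjoint lam S) (hlS : IsLowerIdeal (lam ∪ S)) : CoversVacanciesBelow lam S :=
  ⟨hdisj, fun z hz ⟨y, hy, hzy⟩ =>
    (mem_union.1 (hlS y (mem_union_right _ hy) z hzy.le)).resolve_right hz⟩

end Vacancies

section Tableaux

variable {Λ : Type} [Fintype Λ] [PartialOrder Λ]

theorem isStandard_encodeTab {l : List Λ} (hnd : l.Nodup) (hl : IsLowerIdeal l.toFinset)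
    (hmono : l.Pairwise (¬ · < ·)) : IsStandard (encodeTab l) := by
  have hcard : (shape (encodeTab l)).card = l.length := by
    rw [shape_encodeTab, List.toFinset_card_of_nodup hnd]
  refine ⟨⟨∅, by simp [IsLowerIdeal], by simp, by simpa [shape_encodeTab]⟩, ?_, ?_, ?_⟩
  · intro i hi1 hi
    rw [hcard] at hi
    refine ⟨l[l.length - i], (encodeTab_eq_some_iff hnd).2 ⟨_, by omega, rfl, by omega⟩, ?_⟩
    intro y hy
    obtain ⟨m, hm, rfl, rfl⟩ := (encodeTab_eq_some_iff hnd).1 hy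
    simp only [show l.length - (l.length - m) = m by omega]
  · intro x hx
    rw [shape_encodeTab, List.mem_toFinset] at hx
    obtain ⟨m, hm, rfl⟩ := List.mem_iff_getElem.1 hx
    exact ⟨l.length - m, encodeTab_getElem hnd hm, by omega, by omega⟩
  · intro x y _ _ hxy i j hx hy
    obtain ⟨m, hm, rfl, rfl⟩ := (encodeTab_eq_some_iff hnd).1 hx
    obtain ⟨m', hm', rfl, rfl⟩ := (encodeTab_eq_some_iff hnd).1 hy
    have : m' < m := by
      rcases lt_trichotomy m m' with h | rfl | h
      · exact absurd hxy (List.pairwise_iff_getElem.1 hmono m m' hm hm' h)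
      · exact absurd hxy (lt_irrefl _)
      · exact h
    omega

theorem card_filter_lt_lt_of_lt {p q : Λ} (h : p < q) :
    (univ.filter (q < ·)).card < (univ.filter (p < ·)).card :=
  card_lt_card <| ssubset_iff_of_subset (monotone_filter_right _ fun _ _ => h.trans) |>.2
    ⟨q, by simp [h]⟩

theorem card_filter_lt_lt_card (p : Λ) : (univ.filter (p < ·)).card < Fintype.card Λ :=
  card_lt_univ_of_notMem (x := p) (by simp)

-- The vacancy travels from `p` up to `h`; every other box keeps its occupancy.
theorem shape_slideAux (n : ℕ) (U : Λ → Option ℕ) (p : Λ) (hp : U p = none)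
    (hn : (univ.filter (p < ·)).card < n) :
    ∃ h, p ≤ h ∧ h ∈ insert p (shape U) ∧
      shape (slideAux n U p) = (insert p (shape U)).erase h ∧
      ∀ y ∈ shape (slideAux n U p), ¬ h ⋖ y := by
  induction n generalizing U p with
  | zero => omega
  | succ n ih =>
    by_cases hc : ((shape U).filter fun y => p ⋖ y).Nonempty
    · set y := pickMinBy (lab U) ((shape U).filter fun y => p ⋖ y) hc
      obtain ⟨hyU, hpy⟩ : y ∈ shape U ∧ p ⋖ y := mem_filter.1 (pickMinBy_mem hc)
      set U' : Λ → Option ℕ := fun z => if z = p then U y else if z = y then none else U z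
      have hU' : insert y (shape U') = insert p (shape U) := by
        ext z
        by_cases hzp : z = p
        · simp only [hzp, mem_insert_self, iff_true]
          exact mem_insert_of_mem (mem_shape.2 (by simpa [U'] using mem_shape.1 hyU))
        · by_cases hzy : z = y
          · simp [hzy, hyU]
          · simp [U', mem_shape, hzp, hzy]
      obtain ⟨h, hyh, hh, hsh, hcov⟩ := ih U' y (by simp [U', hpy.ne'])
        (lt_of_lt_of_le (card_filter_lt_lt_of_lt hpy.lt) (by omega))
      rw [hU'] at hh hsh
      have hslide : slideAux (n + 1) U p = slideAux n U' y := by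
        rw [slideAux, dif_pos hc]
      rw [hslide]
      exact ⟨h, hpy.le.trans hyh, hh, hsh, hcov⟩
    · have hslide : slideAux (n + 1) U p = U := by
        rw [slideAux, dif_neg hc]
      rw [hslide]
      exact ⟨p, le_rfl, mem_insert_self _ _, (erase_insert (by simpa [mem_shape] using hp)).symm,
        fun y hy hpy => hc ⟨y, mem_filter.2 ⟨hy, hpy⟩⟩⟩

theorem InnerAdmissible.jdt_eq {T : Λ → Option ℕ} {x : Λ} (hx : InnerAdmissible T x) :
    jdt x T = slideAux (Fintype.card Λ) T x :=
  if_pos hx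

theorem InnerAdmissible.shape_jdt {T : Λ → Option ℕ} {x : Λ} (hx : InnerAdmissible T x) :
    ∃ h ∈ shape T, x < h ∧ shape (jdt x T) = insert x ((shape T).erase h) ∧
      ∀ y ∈ shape (jdt x T), ¬ h < y := by
  rw [hx.jdt_eq]
  obtain ⟨hxT, ⟨y₀, hy₀, hxy₀⟩, hmax⟩ := hx
  obtain ⟨h, hxh, hh, hsh, hcov⟩ :=
    shape_slideAux _ T x hxT (card_filter_lt_lt_card x)
  -- maximality of `x`: no vacancy lies strictly between `x` and an occupied box
  have hocc : ∀ z, ∀ y ∈ shape T, x < z → z ≤ y → z ∈ shape T := by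
    intro z y hy hxz hzy
    rcases hzy.eq_or_lt with rfl | hzy
    · exact hy
    · by_contra hz
      exact hmax z (by simpa [mem_shape] using hz) ⟨y, hy, hzy⟩ hxz
  have hxT' : x ∉ shape T := by simpa [mem_shape] using hxT
  have hhx : h ≠ x := by
    rintro rfl
    obtain ⟨z, hxz, hzy⟩ := exists_covBy_le_of_lt hxy₀
    refine hcov z ?_ hxz
    rw [hsh, erase_insert hxT']
    exact hocc z y₀ hy₀ hxz.lt hzy
  have hxh : x < h := lt_of_le_of_ne hxh hhx.symm
  rw [erase_insert_of_ne hhx.symm] at hsh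
  refine ⟨h, (mem_insert.1 hh).resolve_left hhx, hxh, hsh, fun y hy hhy => ?_⟩
  obtain ⟨z, hhz, hzy⟩ := exists_covBy_le_of_lt hhy
  have hyT : y ∈ shape T := by
    rw [hsh, mem_insert] at hy
    exact mem_of_mem_erase (hy.resolve_left (hxh.trans hhy).ne')
  refine hcov z ?_ hhz
  rw [hsh]
  exact mem_insert_of_mem (mem_erase.2 ⟨hhz.lt.ne', hocc z y hyT (hxh.trans hhz.lt) hzy⟩)

namespace InnerAdmissible

variable {T : Λ → Option ℕ} {x : Λ}

theorem mem_of_coversVacanciesBelow (hx : InnerAdmissible T x) {lam : Finset Λ}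
    (hlam : CoversVacanciesBelow lam (shape T)) : x ∈ lam :=
  hlam.2 x (by simpa [mem_shape] using hx.1) hx.2.1

theorem coversVacanciesBelow_jdt (hx : InnerAdmissible T x) {lam : Finset Λ}
    (hlam : CoversVacanciesBelow lam (shape T)) :
    CoversVacanciesBelow (lam.erase x) (shape (jdt x T)) := by
  obtain ⟨h, hhT, hxh, hsh, hmax⟩ := hx.shape_jdt
  rw [hsh]
  refine ⟨disjoint_left.2 fun z hz hz' => ?_, fun z hz ⟨y, hy, hzy⟩ => ?_⟩
  · obtain ⟨hzx, hzl⟩ := mem_erase.1 hz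
    exact disjoint_left.1 hlam.1 hzl (mem_of_mem_erase ((mem_insert.1 hz').resolve_left hzx))
  · have hzx : z ≠ x := fun h => hz (h ▸ mem_insert_self _ _)
    refine mem_erase.2 ⟨hzx, hlam.2 z (fun hzT => hz ?_) ?_⟩
    · refine mem_insert_of_mem (mem_erase.2 ⟨?_, hzT⟩)
      rintro rfl
      exact hmax y (by rw [hsh]; exact hy) hzy
    · rcases mem_insert.1 hy with rfl | hy
      · exact ⟨h, hhT, hzy.trans hxh⟩
      · exact ⟨y, mem_of_mem_erase hy, hzy⟩

theorem exists_lt_of_exists_lt_jdt (hx : InnerAdmissible T x) {z : Λ}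
    (hz : ∃ y ∈ shape (jdt x T), z < y) : ∃ y ∈ shape T, z < y := by
  obtain ⟨h, hhT, hxh, hsh, -⟩ := hx.shape_jdt
  obtain ⟨y, hy, hzy⟩ := hz
  rw [hsh] at hy
  rcases mem_insert.1 hy with rfl | hy
  · exact ⟨h, hhT, hzy.trans hxh⟩
  · exact ⟨y, mem_of_mem_erase hy, hzy⟩

end InnerAdmissible

theorem infusionStep_encodeTab_nil (U V : Λ → Option ℕ) :
    infusionStep (encodeTab [], U, V) = (encodeTab [], U, V) := by
  simp [infusionStep, shape_encodeTab]

theorem infusionStep_encodeTab_cons {x : Λ} {l : List Λ} (hx : x ∉ l) (U V : Λ → Option ℕ) :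
    ∃ V', infusionStep (encodeTab (x :: l), U, V) =
      (encodeTab l, slideAux (Fintype.card Λ) U x, V') := by
  have hne : (shape (encodeTab (x :: l))).Nonempty := ⟨x, by simp [shape_encodeTab]⟩
  have hpick : pickMaxBy (lab (encodeTab (x :: l))) _ hne = x := by
    by_contra hne'
    have hmax := le_pickMaxBy (f := lab (encodeTab (x :: l))) hne (b := x)
      (by simp [shape_encodeTab])
    rw [lab, encodeTab_cons_self, lab, encodeTab_cons_of_ne _ hne'] at hmax
    exact absurd (hmax.trans (lab_encodeTab_le l _)) (by simp)
  have herase : (fun z => if z = x then none else encodeTab (x :: l) z) = encodeTab l := by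
    funext z
    split_ifs with hz
    · simp [encodeTab, hz, hx]
    · exact encodeTab_cons_of_ne l hz
  simp only [infusionStep, dif_pos hne, hpick, herase]
  exact ⟨_, rfl⟩

def IsSlideSeq : List Λ → (Λ → Option ℕ) → Prop
  | [], _ => True
  | x :: l, T => InnerAdmissible T x ∧ IsSlideSeq l (jdt x T)

theorem isSlideSeq_iff {l : List Λ} {T : Λ → Option ℕ} :
    IsSlideSeq l T ↔
      ∀ i : Fin l.length, InnerAdmissible (applyJdtSeq (l.take i.val) T) (l.get i) := by
  induction l generalizing T with
  | nil => simp [IsSlideSeq]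
  | cons x l ih =>
    rw [IsSlideSeq, ih]
    exact ⟨fun ⟨hx, hs⟩ i => Fin.cases hx hs i, fun h => ⟨h 0, fun i => h i.succ⟩⟩

namespace IsSlideSeq

variable {l : List Λ} {T : Λ → Option ℕ}

theorem exists_lt (hs : IsSlideSeq l T) : ∀ z ∈ l, ∃ y ∈ shape T, z < y := by
  induction l generalizing T with
  | nil => simp
  | cons x l ih =>
    obtain ⟨hx, hs⟩ := hs
    rintro z (_ | ⟨_, hz⟩)
    · exact hx.2.1
    · exact hx.exists_lt_of_exists_lt_jdt (ih hs z hz)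

theorem nodup_and_toFinset_subset (hs : IsSlideSeq l T) {lam : Finset Λ}
    (hlam : CoversVacanciesBelow lam (shape T)) : l.Nodup ∧ l.toFinset ⊆ lam := by
  induction l generalizing T lam with
  | nil => simp
  | cons x l ih =>
    obtain ⟨hx, hs⟩ := hs
    obtain ⟨hnd, hsub⟩ := ih hs (hx.coversVacanciesBelow_jdt hlam)
    refine ⟨List.nodup_cons.2 ⟨fun hxl => ?_, hnd⟩, ?_⟩
    · simpa using hsub (List.mem_toFinset.2 hxl)
    · rw [List.toFinset_cons]
      exact insert_subset (hx.mem_of_coversVacanciesBelow hlam) (hsub.trans (erase_subset _ _))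

theorem pairwise_not_lt (hs : IsSlideSeq l T) {lam : Finset Λ}
    (hlam : CoversVacanciesBelow lam (shape T)) : l.Pairwise (¬ · < ·) := by
  induction l generalizing T lam with
  | nil => simp
  | cons x l ih =>
    obtain ⟨hx, hs'⟩ := hs
    have hlam' := hx.coversVacanciesBelow_jdt hlam
    refine List.pairwise_cons.2 ⟨fun z hz => ?_, ih hs' hlam'⟩
    have hzl : z ∈ lam := mem_of_mem_erase ((hs'.nodup_and_toFinset_subset hlam').2
      (List.mem_toFinset.2 hz))
    -- `x` is a maximal vacancy below `T`, and `z` is another one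
    exact hx.2.2 z (by simpa [mem_shape] using disjoint_left.1 hlam.1 hzl)
      (hx.exists_lt_of_exists_lt_jdt (hs'.exists_lt z hz))

theorem infusionStep_iterate (hs : IsSlideSeq l T) (hnd : l.Nodup) (V : Λ → Option ℕ) :
    ∃ V', infusionStep^[l.length] (encodeTab l, T, V) = (encodeTab [], applyJdtSeq l T, V') := by
  induction l generalizing T V with
  | nil => exact ⟨V, rfl⟩
  | cons x l ih =>
    obtain ⟨hx, hs⟩ := hs
    obtain ⟨hxl, hnd⟩ := List.nodup_cons.1 hnd
    obtain ⟨V₁, hV₁⟩ := infusionStep_encodeTab_cons hxl T V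
    rw [← hx.jdt_eq] at hV₁
    obtain ⟨V₂, hV₂⟩ := ih hs hnd V₁
    exact ⟨V₂, by rw [List.length_cons, Function.iterate_succ_apply, hV₁, hV₂]; rfl⟩

theorem infusion_fst (hs : IsSlideSeq l T) (hnd : l.Nodup) :
    (infusion (encodeTab l) T).1 = applyJdtSeq l T := by
  obtain ⟨V, hV⟩ := hs.infusionStep_iterate hnd fun _ => none
  rw [infusion, ← Nat.sub_add_cancel hnd.length_le_card, Function.iterate_add_apply, hV,
    Function.iterate_fixed (infusionStep_encodeTab_nil _ _)]

end IsSlideSeq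

end Tableaux

theorem rectification_encoded_by_tableau_general {Λ : Type} [Fintype Λ]
    [PartialOrder Λ] (T : Λ → Option ℕ)
    (lam : Finset Λ) (hlam : IsLowerIdeal lam)
    (hdisj : Disjoint lam (shape T)) (hnu : IsLowerIdeal (lam ∪ shape T))
    (l : List Λ) (hlen : l.length = lam.card)
    (hadm : ∀ i : Fin l.length,
      InnerAdmissible (applyJdtSeq (l.take i.val) T) (l.get i)) :
    IsStandard (encodeTab l) ∧ shape (encodeTab l) = lam ∧
      applyJdtSeq l T = (infusion (encodeTab l) T).1 := by
  have hs : IsSlideSeq l T := isSlideSeq_iff.2 hadm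
  have hvac := coversVacanciesBelow_of_isLowerIdeal hdisj hnu
  obtain ⟨hnd, hsub⟩ := hs.nodup_and_toFinset_subset hvac
  have hl : l.toFinset = lam :=
    Finset.eq_of_subset_of_card_le hsub (by rw [List.toFinset_card_of_nodup hnd, hlen])
  exact ⟨isStandard_encodeTab hnd (hl ▸ hlam) (hs.pairwise_not_lt hvac),
    (shape_encodeTab l).trans hl, (hs.infusion_fst hnd).symm⟩

/-- Any rectification sequence of `T` is encoded by a standard
tableau `A` of the inner straight shape, and the rectification via that
sequence equals `infusion₁(A,T)`. -/
theorem rectification_encoded_by_tableau {Λ : Type} [Fintype Λ]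
    [PartialOrder Λ] (T : Λ → Option ℕ) (hT : IsStandard T)
    (lam : Finset Λ) (hlam : IsLowerIdeal lam)
    (hdisj : Disjoint lam (shape T)) (hnu : IsLowerIdeal (lam ∪ shape T))
    (l : List Λ) (hnd : l.Nodup) (hlen : l.length = lam.card)
    (hadm : ∀ i : Fin l.length,
      InnerAdmissible (applyJdtSeq (l.take i.val) T) (l.get i))
    (hrect : IsLowerIdeal (shape (applyJdtSeq l T))) :
    IsStandard (encodeTab l) ∧ shape (encodeTab l) = lam ∧
      applyJdtSeq l T = (infusion (encodeTab l) T).1 :=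
  rectification_encoded_by_tableau_general T lam hlam hdisj hnu l hlen hadm
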